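/- When a new client c is added to the graph (with any set of incident edges to servers), the unique balanced server flow loads can only increase: for every server s, the balanced load after the insertion is at least the balanced load before the insertion. -/

import Mathlib

open scoped Classical

/-- The load of server `s` under flow `x`. -/
def load {C S : Type*} [Fintype C] (x : C → S → ℝ) (s : S) : ℝ := ∑ c, x c s

/-- `x` is a server flow: nonnegative, supported on edges, each client sends one unit. -/
def IsServerFlow {C S : Type*} [Fintype S] (Adj : C → S → Prop) (x : C → S → ℝ) : Prop :=
  (∀ c s, 0 ≤ x c s) ∧ (∀ c s, ¬ Adj c s → x c s = 0) ∧ (∀ c, ∑ s, x c s = 1)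

/-- `x` is balanced: each client only sends flow to its minimum-load neighbors. -/
def IsBalanced {C S : Type*} [Fintype C] [Fintype S] (Adj : C → S → Prop)
    (x : C → S → ℝ) : Prop :=
  ∀ c s, 0 < x c s → ∀ s', Adj c s' → load x s ≤ load x s'

/-- The active neighbors `A(c)` of a client `c`: the minimum-load neighbors of `c`. -/
noncomputable def activeN {C S : Type*} [Fintype C] [Fintype S] (Adj : C → S → Prop)
    (x : C → S → ℝ) (c : C) : Finset S :=
  Finset.univ.filter fun s => Adj c s ∧ ∀ s', Adj c s' → load x s ≤ load x s'

/-!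
Suppose some server load drops, and let `T` be the set of servers whose load drops. Every old
client `c` that sends flow into `T` before the insertion sends all of its flow into `T`
afterwards: if it used a server `s' ∉ T`, then for a server `s ∈ T` it used before,
`load y s' ≤ load y s < load x s ≤ load x s' ≤ load y s'` by the two balance conditions.
Counting these clients, the total load on `T` cannot drop, a contradiction.
-/

theorem sum_load {C S : Type*} [Fintype C] (x : C → S → ℝ) (T : Finset S) :
    ∑ s ∈ T, load x s = ∑ c, ∑ s ∈ T, x c s := by
  simp only [load]
  exact Finset.sum_comm

namespace IsServerFlow

variable {C S : Type*} [Fintype S] {Adj : C → S → Prop} {x : C → S → ℝ}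

theorem adj_of_pos (hx : IsServerFlow Adj x) {c : C} {s : S} (h : 0 < x c s) : Adj c s := by
  by_contra hA
  exact h.ne' (hx.2.1 c s hA)

theorem sum_load_le_card [Fintype C] (hx : IsServerFlow Adj x) (T : Finset S) (D : Finset C)
    (hD : ∀ c, ∀ s ∈ T, 0 < x c s → c ∈ D) : ∑ s ∈ T, load x s ≤ D.card := by
  have hout : ∀ c ∉ D, ∑ s ∈ T, x c s = 0 := fun c hc =>
    Finset.sum_eq_zero fun s hs => le_antisymm (not_lt.mp fun h => hc (hD c s hs h)) (hx.1 c s)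
  calc ∑ s ∈ T, load x s = ∑ c ∈ D, ∑ s ∈ T, x c s := by
        rw [sum_load, Finset.sum_subset (Finset.subset_univ D) fun c _ hc => hout c hc]
    _ ≤ ∑ c ∈ D, ∑ s, x c s := Finset.sum_le_sum fun c _ =>
        Finset.sum_le_sum_of_subset_of_nonneg (Finset.subset_univ T) fun s _ _ => hx.1 c s
    _ = D.card := by simp [hx.2.2]

theorem card_le_sum_load [Fintype C] (hx : IsServerFlow Adj x) (T : Finset S) (D : Finset C)
    (hD : ∀ c ∈ D, ∀ s ∉ T, x c s = 0) : (D.card : ℝ) ≤ ∑ s ∈ T, load x s := by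
  calc (D.card : ℝ) = ∑ c ∈ D, ∑ s, x c s := by simp [hx.2.2]
    _ = ∑ c ∈ D, ∑ s ∈ T, x c s := Finset.sum_congr rfl fun c hc =>
        (Finset.sum_subset (Finset.subset_univ T) fun s _ hs => hD c hc s hs).symm
    _ ≤ ∑ c, ∑ s ∈ T, x c s := Finset.sum_le_sum_of_subset_of_nonneg (Finset.subset_univ D)
        fun c _ _ => Finset.sum_nonneg fun s _ => hx.1 c s
    _ = ∑ s ∈ T, load x s := (sum_load x T).symm

end IsServerFlow

section Insertion

variable {C C' S : Type*} [Fintype C] [Fintype C'] [Fintype S]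
  {Adj : C → S → Prop} {Adj' : C' → S → Prop} {x : C → S → ℝ} {y : C' → S → ℝ}

theorem IsBalanced.apply_eq_zero_of_load_lt {f : C → C'} (hf : ∀ c s, Adj' (f c) s ↔ Adj c s)
    (hx : IsServerFlow Adj x) (hxb : IsBalanced Adj x)
    (hy : IsServerFlow Adj' y) (hyb : IsBalanced Adj' y)
    {c : C} {s s' : S} (hcs : 0 < x c s) (hs : load y s < load x s)
    (hs' : load x s' ≤ load y s') : y (f c) s' = 0 := by
  by_contra hne
  have hpos : 0 < y (f c) s' := lt_of_le_of_ne (hy.1 _ _) (Ne.symm hne)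
  have hy_le : load y s' ≤ load y s := hyb _ _ hpos s ((hf c s).mpr (hx.adj_of_pos hcs))
  have hx_le : load x s ≤ load x s' := hxb c s hcs s' ((hf c s').mp (hy.adj_of_pos hpos))
  linarith

theorem load_le_load_of_embedding (f : C ↪ C') (hf : ∀ c s, Adj' (f c) s ↔ Adj c s)
    (hx : IsServerFlow Adj x) (hxb : IsBalanced Adj x)
    (hy : IsServerFlow Adj' y) (hyb : IsBalanced Adj' y) (s : S) : load x s ≤ load y s := by
  by_contra! hs
  set T : Finset S := {s | load y s < load x s}
  set D : Finset C := {c | ∃ s ∈ T, 0 < x c s}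
  have hD : ∀ c ∈ D.map f, ∀ s' ∉ T, y c s' = 0 := by
    simp only [Finset.mem_map, forall_exists_index, and_imp]
    rintro _ c hc rfl s' hs'
    obtain ⟨s, hsT, hcs⟩ := (Finset.mem_filter.mp hc).2
    exact hxb.apply_eq_zero_of_load_lt hf hx hy hyb hcs (Finset.mem_filter.mp hsT).2
      (not_lt.mp fun h => hs' (Finset.mem_filter.mpr ⟨Finset.mem_univ _, h⟩))
  have hdrop : ∑ s ∈ T, load y s < ∑ s ∈ T, load x s :=
    Finset.sum_lt_sum_of_nonempty ⟨s, by simpa [T] using hs⟩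
      fun t ht => (Finset.mem_filter.mp ht).2
  have hx_le := hx.sum_load_le_card T D fun c s hsT hcs =>
    Finset.mem_filter.mpr ⟨Finset.mem_univ _, s, hsT, hcs⟩
  have hy_ge := hy.card_le_sum_load T (D.map f) hD
  rw [Finset.card_map] at hy_ge
  linarith

end Insertion

theorem stmt_10_general {C S : Type*} [Fintype C] [Fintype S]
    (Adj : C → S → Prop) (newAdj : S → Prop)
    (Adj' : Option C → S → Prop)
    (hAdj' : ∀ o s, Adj' o s ↔ o.elim (newAdj s) (fun c => Adj c s))
    (x : C → S → ℝ) (y : Option C → S → ℝ)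
    (hx : IsServerFlow Adj x ∧ IsBalanced Adj x)
    (hy : IsServerFlow Adj' y ∧ IsBalanced Adj' y) :
    ∀ s, load x s ≤ load y s :=
  load_le_load_of_embedding Function.Embedding.some (fun c s => hAdj' (some c) s)
    hx.1 hx.2 hy.1 hy.2

/-- When a new client (with a nonempty set of edges to the servers) is inserted, the
balanced server loads can only increase: if `x` is a balanced flow of the old graph and
`y` a balanced flow of the new graph, then every server load weakly increases. -/
theorem stmt_10 {C S : Type*} [Fintype C] [Fintype S]
    (Adj : C → S → Prop) (newAdj : S → Prop)
    (hnb : ∀ c : C, ∃ s, Adj c s) (hnew : ∃ s, newAdj s)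
    (Adj' : Option C → S → Prop)
    (hAdj' : ∀ o s, Adj' o s ↔ o.elim (newAdj s) (fun c => Adj c s))
    (x : C → S → ℝ) (y : Option C → S → ℝ)
    (hx : IsServerFlow Adj x ∧ IsBalanced Adj x)
    (hy : IsServerFlow Adj' y ∧ IsBalanced Adj' y) :
    ∀ s, load x s ≤ load y s :=
  stmt_10_general Adj newAdj Adj' hAdj' x y hx hy
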